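/- arXiv:1304.1000 — 9 statements merged into one kernel-verified Lean document; each statement's English description precedes it below -/
import Mathlib

section
/- If P₁ and P₂ are passages of a directed graph G = (V,E), then the set difference P₁ \ P₂ is a passage of G. -/
/-- A passage of a directed graph with edge set `E`: a set `P ⊆ E` of edges such that
for every `(x,y) ∈ P`, any edge of `E` with initial vertex `x` or terminal vertex `y`
is also in `P`. -/
def IsPassage {α : Type*} (E P : Set (α × α)) : Prop :=
  P ⊆ E ∧ ∀ x y, (x, y) ∈ P →
    (∀ y', (x, y') ∈ E → (x, y') ∈ P) ∧ (∀ x', (x', y) ∈ E → (x', y) ∈ P)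

/-- Passages are closed under set difference. -/
theorem passage_diff {α : Type*} (V : Set α) (E : Set (α × α)) (hE : E ⊆ V ×ˢ V)
    (P₁ P₂ : Set (α × α)) (h₁ : IsPassage E P₁) (h₂ : IsPassage E P₂) :
    IsPassage E (P₁ \ P₂) := by
  obtain ⟨hs₁, hc₁⟩ := h₁
  obtain ⟨hs₂, hc₂⟩ := h₂
  refine ⟨fun e he => hs₁ he.1, fun x y hxy => ?_⟩
  obtain ⟨hxy₁, hxy₂⟩ := hxy
  constructor
  · intro y' hy'
    refine ⟨(hc₁ x y hxy₁).1 y' hy', fun hmem => ?_⟩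
    exact hxy₂ ((hc₂ x y' hmem).1 y (hs₁ hxy₁))
  · intro x' hx'
    refine ⟨(hc₁ x y hxy₁).2 x' hx', fun hmem => ?_⟩
    exact hxy₂ ((hc₂ x' y hmem).2 x (hs₁ hxy₁))
end

section
/- For passages P₁ and P₂ of a directed graph G = (V,E): π₂(P₁) = π₂(P₂) if and only if P₁ = P₂. -/
/-- A passage is fully determined by its set of terminal vertices. -/
theorem passage_eq_iff_pi2_eq {α : Type*} (V : Set α) (E : Set (α × α)) (hE : E ⊆ V ×ˢ V)
    (P₁ P₂ : Set (α × α)) (h₁ : IsPassage E P₁) (h₂ : IsPassage E P₂) :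
    Prod.snd '' P₁ = Prod.snd '' P₂ ↔ P₁ = P₂ := by
  constructor
  · intro h
    have key : ∀ (P Q : Set (α × α)), IsPassage E P → IsPassage E Q →
        Prod.snd '' P ⊆ Prod.snd '' Q → P ⊆ Q := by
      intro P Q hP hQ hsub p hp
      obtain ⟨x, y⟩ := p
      have hy : y ∈ Prod.snd '' Q := hsub ⟨(x, y), hp, rfl⟩
      obtain ⟨⟨x', y'⟩, hq, rfl⟩ := hy
      exact (hQ.2 x' y' hq).2 x (hP.1 hp)
    exact Set.Subset.antisymm (key P₁ P₂ h₁ h₂ h.le) (key P₂ P₁ h₂ h₁ h.ge)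
  · rintro rfl; rfl
end

section
/- For passages P₁ and P₂ of a directed graph G = (V,E): P₁ ∩ P₂ = ∅ if and only if π₂(P₁) ∩ π₂(P₂) = ∅. -/
/-- Two passages are disjoint iff their sets of terminal vertices are disjoint. -/
theorem passage_disjoint_iff_pi2_disjoint {α : Type*} (V : Set α) (E : Set (α × α))
    (hE : E ⊆ V ×ˢ V)
    (P₁ P₂ : Set (α × α)) (h₁ : IsPassage E P₁) (h₂ : IsPassage E P₂) :
    P₁ ∩ P₂ = ∅ ↔ (Prod.snd '' P₁) ∩ (Prod.snd '' P₂) = ∅ := by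
  constructor
  · intro h
    ext y
    simp only [Set.mem_inter_iff, Set.mem_image, Set.mem_empty_iff_false, iff_false]
    rintro ⟨⟨⟨x₁, y₁⟩, hm1, rfl⟩, ⟨x₂, y₂⟩, hm2, hy⟩
    cases hy
    have : (x₁, y₁) ∈ P₂ := (h₂.2 x₂ y₁ hm2).2 x₁ (h₁.1 hm1)
    have : (x₁, y₁) ∈ P₁ ∩ P₂ := ⟨hm1, this⟩
    simp [h] at this
  · intro h
    ext e
    simp only [Set.mem_inter_iff, Set.mem_empty_iff_false, iff_false]
    rintro ⟨he1, he2⟩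
    have : e.2 ∈ (Prod.snd '' P₁) ∩ (Prod.snd '' P₂) := ⟨⟨e, he1, rfl⟩, ⟨e, he2, rfl⟩⟩
    simp [h] at this
end

section
/- Let G = (V,E) be a directed graph. If P₁ and P₂ are minimal passages of G with P₁ ≠ P₂, then P₁ ∩ P₂ = ∅; that is, two distinct minimal passages cannot share an edge. -/
/-- A minimal passage: a nonempty passage having no nonempty passage as a proper subset. -/
def IsMinimalPassage {α : Type*} (E P : Set (α × α)) : Prop :=
  IsPassage E P ∧ P ≠ ∅ ∧ ∀ P' : Set (α × α), IsPassage E P' → P' ≠ ∅ → ¬ P' ⊂ P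

/-- Two distinct minimal passages are disjoint. -/
theorem minimal_passages_disjoint {α : Type*} (V : Set α) (E : Set (α × α))
    (hE : E ⊆ V ×ˢ V) (P₁ P₂ : Set (α × α))
    (h₁ : IsMinimalPassage E P₁) (h₂ : IsMinimalPassage E P₂) (hne : P₁ ≠ P₂) :
    P₁ ∩ P₂ = ∅ := by
  by_contra hI
  have hInt : IsPassage E (P₁ ∩ P₂) := by
    constructor
    · exact fun e he => h₁.1.1 he.1
    · intro x y hxy
      obtain ⟨h1a, h1b⟩ := h₁.1.2 x y hxy.1
      obtain ⟨h2a, h2b⟩ := h₂.1.2 x y hxy.2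
      exact ⟨fun y' hy' => ⟨h1a y' hy', h2a y' hy'⟩,
             fun x' hx' => ⟨h1b x' hx', h2b x' hx'⟩⟩
  have e1 : P₁ ∩ P₂ = P₁ := by
    by_contra h
    exact h₁.2.2 _ hInt hI ⟨Set.inter_subset_left, fun hs => h (le_antisymm Set.inter_subset_left (Set.subset_inter (le_refl _) (hs.trans Set.inter_subset_right)))⟩
  have e2 : P₁ ∩ P₂ = P₂ := by
    by_contra h
    exact h₂.2.2 _ hInt hI ⟨Set.inter_subset_right, fun hs => h (le_antisymm Set.inter_subset_right (Set.subset_inter (hs.trans Set.inter_subset_left) (le_refl _)))⟩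
  exact hne (e1 ▸ e2)
end

section
/- Let G = (V,E) be a directed graph and P a passage of G. Then there is a set {P₁, …, Pₙ} of minimal passages of G that are pairwise disjoint and satisfy P₁ ∪ ⋯ ∪ Pₙ = P; that is, every passage is the disjoint union of the minimal passages it contains. -/
namespace PassageAux

variable {α : Type*} (E : Set (α × α))

/-- The passage generated by an edge. -/
def gen (e : α × α) : Set (α × α) := ⋂₀ {P' | IsPassage E P' ∧ e ∈ P'}

lemma isPassage_self : IsPassage E E :=
  ⟨le_refl _, fun _ _ _ => ⟨fun _ h => h, fun _ h => h⟩⟩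

lemma mem_gen (e : α × α) : e ∈ gen E e :=
  Set.mem_sInter.mpr fun _ hP' => hP'.2

lemma gen_subset {e : α × α} {P' : Set (α × α)} (h : IsPassage E P') (he : e ∈ P') :
    gen E e ⊆ P' :=
  Set.sInter_subset_of_mem ⟨h, he⟩

lemma gen_isPassage {e : α × α} (he : e ∈ E) : IsPassage E (gen E e) := by
  constructor
  · exact gen_subset E (isPassage_self E) he
  · intro x y hxy
    constructor
    · intro y' hy'
      exact Set.mem_sInter.mpr fun P' hP' =>
        (hP'.1.2 x y (Set.mem_sInter.mp hxy P' hP')).1 y' hy'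
    · intro x' hx'
      exact Set.mem_sInter.mpr fun P' hP' =>
        (hP'.1.2 x y (Set.mem_sInter.mp hxy P' hP')).2 x' hx'

lemma diff_isPassage {Q P' : Set (α × α)} (hQ : IsPassage E Q) (hP' : IsPassage E P') :
    IsPassage E (Q \ P') := by
  refine ⟨fun e he => hQ.1 he.1, ?_⟩
  rintro x y ⟨hxyQ, hxyP⟩
  constructor
  · intro y' hy'
    exact ⟨(hQ.2 x y hxyQ).1 y' hy',
      fun h => hxyP ((hP'.2 x y' h).1 y (hQ.1 hxyQ))⟩
  · intro x' hx'
    exact ⟨(hQ.2 x y hxyQ).2 x' hx',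
      fun h => hxyP ((hP'.2 x' y h).2 x (hQ.1 hxyQ))⟩

lemma gen_ne_empty (e : α × α) : gen E e ≠ ∅ :=
  Set.nonempty_iff_ne_empty.mp ⟨e, mem_gen E e⟩

lemma gen_minimal {e : α × α} (he : e ∈ E) : IsMinimalPassage E (gen E e) := by
  refine ⟨gen_isPassage E he, gen_ne_empty E e, ?_⟩
  intro P' hP' hne hss
  by_cases hmem : e ∈ P'
  · exact hss.2 (gen_subset E hP' hmem)
  · have hsub : gen E e ⊆ gen E e \ P' :=
      gen_subset E (diff_isPassage E (gen_isPassage E he) hP') ⟨mem_gen E e, hmem⟩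
    obtain ⟨g, hg⟩ := Set.nonempty_iff_ne_empty.mpr hne
    exact (hsub (hss.1 hg)).2 hg

end PassageAux

/-- Every passage is the disjoint union of minimal passages. -/
theorem passage_eq_sUnion_minimal {α : Type*} (V : Set α) (E : Set (α × α))
    (hE : E ⊆ V ×ˢ V) (P : Set (α × α)) (hP : IsPassage E P) :
    ∃ 𝒮 : Set (Set (α × α)),
      (∀ Q ∈ 𝒮, IsMinimalPassage E Q) ∧
      (∀ Q ∈ 𝒮, ∀ R ∈ 𝒮, Q ≠ R → Q ∩ R = ∅) ∧
      ⋃₀ 𝒮 = P := by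
  classical
  refine ⟨PassageAux.gen E '' P, ?_, ?_, ?_⟩
  · rintro Q ⟨e, heP, rfl⟩
    exact PassageAux.gen_minimal E (hP.1 heP)
  · rintro Q ⟨e, heP, rfl⟩ R ⟨f, hfP, rfl⟩ hne
    by_contra h
    obtain ⟨g, hgQ, hgR⟩ := Set.nonempty_iff_ne_empty.mpr h
    have heE : e ∈ E := hP.1 heP
    have hfE : f ∈ E := hP.1 hfP
    have hgE : g ∈ E := (PassageAux.gen_isPassage E heE).1 hgQ
    have h1 : PassageAux.gen E g = PassageAux.gen E e := by
      have hsub := PassageAux.gen_subset E (PassageAux.gen_isPassage E heE) hgQ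
      rcases hsub.eq_or_ssubset with h' | h'
      · exact h'
      · exact absurd h' ((PassageAux.gen_minimal E heE).2.2 _
          (PassageAux.gen_isPassage E hgE) (PassageAux.gen_ne_empty E g))
    have h2 : PassageAux.gen E g = PassageAux.gen E f := by
      have hsub := PassageAux.gen_subset E (PassageAux.gen_isPassage E hfE) hgR
      rcases hsub.eq_or_ssubset with h' | h'
      · exact h'
      · exact absurd h' ((PassageAux.gen_minimal E hfE).2.2 _
          (PassageAux.gen_isPassage E hgE) (PassageAux.gen_ne_empty E g))
    exact hne (h1 ▸ h2 ▸ rfl)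
  · apply Set.Subset.antisymm
    · rintro g ⟨Q, ⟨e, heP, rfl⟩, hg⟩
      exact PassageAux.gen_subset E hP heP hg
    · intro p hp
      exact ⟨PassageAux.gen E p, ⟨p, hp, rfl⟩, PassageAux.mem_gen E p⟩
end

section
/- Let G = (V,E) be a directed graph with E finite, and let k be the number of minimal passages of G. Then the number of passages of G equals 2^k. -/
section Aux

variable {α : Type*}

/-- One-step adjacency between edges: both in `E` and sharing source or target. -/
def PStep (E : Set (α × α)) (a b : α × α) : Prop :=
  a ∈ E ∧ b ∈ E ∧ (a.1 = b.1 ∨ a.2 = b.2)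

/-- The equivalence generated by `PStep`. -/
def PRel (E : Set (α × α)) : α × α → α × α → Prop := Relation.EqvGen (PStep E)

/-- The class of an edge. -/
def minp (E : Set (α × α)) (e : α × α) : Set (α × α) := {e' | e' ∈ E ∧ PRel E e e'}

lemma passage_stable {E P : Set (α × α)} (hP : IsPassage E P) :
    ∀ a b, PRel E a b → (a ∈ P → b ∈ P) ∧ (b ∈ P → a ∈ P) := by
  intro a b h
  induction h with
  | rel a b hs =>
    obtain ⟨ha, hb, hor⟩ := hs
    constructor
    · intro haP
      rcases hor with h1 | h2
      · have := (hP.2 a.1 a.2 (by simpa using haP)).1 b.2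
        rw [h1] at this
        simpa using this (by simpa using hb)
      · have := (hP.2 a.1 a.2 (by simpa using haP)).2 b.1
        rw [h2] at this
        simpa using this (by simpa using hb)
    · intro hbP
      rcases hor with h1 | h2
      · have := (hP.2 b.1 b.2 (by simpa using hbP)).1 a.2
        rw [← h1] at this
        simpa using this (by simpa using ha)
      · have := (hP.2 b.1 b.2 (by simpa using hbP)).2 a.1
        rw [← h2] at this
        simpa using this (by simpa using ha)
  | refl a => exact ⟨id, id⟩
  | symm a b _ ih => exact ⟨ih.2, ih.1⟩
  | trans a b c _ _ ih1 ih2 => exact ⟨fun h => ih2.1 (ih1.1 h), fun h => ih1.2 (ih2.2 h)⟩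

lemma mem_minp_self {E : Set (α × α)} {e : α × α} (he : e ∈ E) : e ∈ minp E e :=
  ⟨he, Relation.EqvGen.refl e⟩

lemma isPassage_minp {E : Set (α × α)} (e : α × α) : IsPassage E (minp E e) := by
  refine ⟨fun e' h => h.1, ?_⟩
  intro x y hxy
  constructor
  · intro y' hy'
    exact ⟨hy', Relation.EqvGen.trans _ _ _ hxy.2
      (Relation.EqvGen.rel _ _ ⟨hxy.1, hy', Or.inl rfl⟩)⟩
  · intro x' hx'
    exact ⟨hx', Relation.EqvGen.trans _ _ _ hxy.2
      (Relation.EqvGen.rel _ _ ⟨hxy.1, hx', Or.inr rfl⟩)⟩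

lemma minp_subset {E P : Set (α × α)} (hP : IsPassage E P) {e : α × α} (he : e ∈ P) :
    minp E e ⊆ P := fun e' h => (passage_stable hP e e' h.2).1 he

lemma isMinimal_minp {E : Set (α × α)} {e : α × α} (he : e ∈ E) :
    IsMinimalPassage E (minp E e) := by
  refine ⟨isPassage_minp e, ?_, ?_⟩
  · exact Set.nonempty_iff_ne_empty.1 ⟨e, mem_minp_self he⟩
  · intro P' hP' hne hss
    obtain ⟨e'', he''⟩ := Set.nonempty_iff_ne_empty.2 hne
    have hrel : PRel E e e'' := (hss.1 he'').2
    have hsub : minp E e ⊆ P' := by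
      intro e' he'
      have hr : PRel E e'' e' :=
        Relation.EqvGen.trans _ _ _ (Relation.EqvGen.symm _ _ hrel) he'.2
      exact (passage_stable hP' e'' e' hr).1 he''
    exact hss.2 hsub

lemma minimal_eq_minp {E M : Set (α × α)} (hM : IsMinimalPassage E M) {e : α × α}
    (he : e ∈ M) : M = minp E e := by
  have heE : e ∈ E := hM.1.1 he
  have h1 : minp E e ⊆ M := minp_subset hM.1 he
  have h2 := hM.2.2 (minp E e) (isPassage_minp e)
    (Set.nonempty_iff_ne_empty.1 ⟨e, mem_minp_self heE⟩)
  exact (eq_of_le_of_not_lt h1 h2).symm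

lemma isPassage_iUnion {E : Set (α × α)} {ι : Sort*} {Q : ι → Set (α × α)}
    (h : ∀ i, IsPassage E (Q i)) : IsPassage E (⋃ i, Q i) := by
  refine ⟨Set.iUnion_subset fun i => (h i).1, ?_⟩
  intro x y hxy
  obtain ⟨i, hi⟩ := Set.mem_iUnion.1 hxy
  constructor
  · intro y' hy'
    exact Set.mem_iUnion.2 ⟨i, ((h i).2 x y hi).1 y' hy'⟩
  · intro x' hx'
    exact Set.mem_iUnion.2 ⟨i, ((h i).2 x y hi).2 x' hx'⟩

end Aux

/-- If `E` is finite and `k` is the number of minimal passages, then there are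
exactly `2^k` passages. -/
theorem card_passages_eq_two_pow {α : Type*} (V : Set α) (E : Set (α × α))
    (hE : E ⊆ V ×ˢ V) (hfin : E.Finite) (k : ℕ)
    (hk : {P : Set (α × α) | IsMinimalPassage E P}.ncard = k) :
    {P : Set (α × α) | IsPassage E P}.ncard = 2 ^ k := by
  classical
  set M : Set (Set (α × α)) := {P | IsMinimalPassage E P} with hM
  have hMfin : M.Finite := by
    apply Set.Finite.subset hfin.finite_subsets
    intro Q hQ
    exact hQ.1.1
  have hequiv : {P : Set (α × α) | IsPassage E P} ≃ Set M := by
    refine ⟨fun P => {Q | (Q : Set (α × α)) ⊆ (P : Set (α × α))},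
      fun S => ⟨⋃ (Q : M) (_ : Q ∈ S), (Q : Set (α × α)), ?_⟩, ?_, ?_⟩
    · exact isPassage_iUnion fun Q => isPassage_iUnion fun _ => Q.2.1
    · intro P
      apply Subtype.ext
      ext e
      simp only [Set.mem_iUnion]
      constructor
      · rintro ⟨Q, hQS, heQ⟩
        exact hQS heQ
      · intro heP
        have heE : e ∈ E := P.2.1 heP
        exact ⟨⟨minp E e, isMinimal_minp heE⟩, minp_subset P.2 heP, mem_minp_self heE⟩
    · intro S
      ext Q
      simp only [Set.mem_setOf_eq]
      constructor
      · intro hsub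
        obtain ⟨e, heQ⟩ := Set.nonempty_iff_ne_empty.2 Q.2.2.1
        obtain ⟨Q', hQ'S, heQ'⟩ := Set.mem_iUnion₂.1 (hsub heQ)
        have h1 : (Q : Set (α × α)) = minp E e := minimal_eq_minp Q.2 heQ
        have h2 : (Q' : Set (α × α)) = minp E e := minimal_eq_minp Q'.2 heQ'
        have hqq : Q = Q' := Subtype.ext (h1.trans h2.symm)
        rw [hqq]
        exact hQ'S
      · intro hQS e he
        exact Set.mem_iUnion₂.2 ⟨Q, hQS, he⟩
  have h1 : {P : Set (α × α) | IsPassage E P}.ncard = Nat.card (Set M) :=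
    Nat.card_congr hequiv
  rw [h1]
  haveI : Finite M := hMfin
  haveI : Fintype M := Fintype.ofFinite _
  rw [Nat.card_eq_fintype_card, Fintype.card_set]
  have h2 : Fintype.card M = k := by
    rw [← Nat.card_eq_fintype_card, Nat.card_coe_set_eq, hk]
  rw [h2]
end

section
/- Let G = (V,E) be a directed graph with E finite, and let k be the number of minimal passages of G. Then for any passage partitioning 𝒫 of G with n = |𝒫|, one has n ≤ k ≤ |E|. -/
/-- A passage partitioning: a set of nonempty passages that are pairwise disjoint
and whose union is `E`. -/
def IsPassagePartitioning {α : Type*} (E : Set (α × α)) (𝓟 : Set (Set (α × α))) : Prop :=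
  (∀ P ∈ 𝓟, IsPassage E P ∧ P ≠ ∅) ∧
  (∀ P ∈ 𝓟, ∀ Q ∈ 𝓟, P ≠ Q → P ∩ Q = ∅) ∧
  ⋃₀ 𝓟 = E


lemma passage_inter {α : Type*} {E P Q : Set (α × α)} (hP : IsPassage E P)
    (hQ : IsPassage E Q) : IsPassage E (P ∩ Q) := by
  refine ⟨fun e he => hP.1 he.1, fun x y hxy => ⟨fun y' hy' => ?_, fun x' hx' => ?_⟩⟩
  · exact ⟨(hP.2 x y hxy.1).1 y' hy', (hQ.2 x y hxy.2).1 y' hy'⟩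
  · exact ⟨(hP.2 x y hxy.1).2 x' hx', (hQ.2 x y hxy.2).2 x' hx'⟩

lemma exists_minimal_sub {α : Type*} {E : Set (α × α)} (hfin : E.Finite) :
    ∀ n (P : Set (α × α)), P.ncard ≤ n → IsPassage E P → P ≠ ∅ →
      ∃ M, IsMinimalPassage E M ∧ M ⊆ P := by
  intro n
  induction n with
  | zero =>
    intro P hle hP hne
    have hPfin : P.Finite := hfin.subset hP.1
    exact absurd ((Set.ncard_eq_zero hPfin).mp (Nat.le_zero.mp hle)) hne
  | succ m ih =>
    intro P hle hP hne
    by_cases h : ∀ P', IsPassage E P' → P' ≠ ∅ → ¬ P' ⊂ P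
    · exact ⟨P, ⟨hP, hne, h⟩, subset_rfl⟩
    · push_neg at h
      obtain ⟨P', hP', hne', hss⟩ := h
      have hPfin : P.Finite := hfin.subset hP.1
      have hlt : P'.ncard < P.ncard := Set.ncard_lt_ncard hss hPfin
      obtain ⟨M, hM, hsub⟩ := ih P' (by omega) hP' hne'.ne_empty
      exact ⟨M, hM, hsub.trans hss.subset⟩

lemma minimal_eq_of_inter {α : Type*} {E P Q : Set (α × α)}
    (hP : IsMinimalPassage E P) (hQ : IsMinimalPassage E Q)
    (hne : (P ∩ Q).Nonempty) : P = Q := by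
  have hint := passage_inter hP.1 hQ.1
  have hne' : P ∩ Q ≠ ∅ := hne.ne_empty
  have h1 : P ∩ Q = P :=
    (Set.inter_subset_left.ssubset_or_eq).resolve_left (hP.2.2 _ hint hne')
  have h2 : P ∩ Q = Q :=
    (Set.inter_subset_right.ssubset_or_eq).resolve_left (hQ.2.2 _ hint hne')
  rw [← h1, h2]

/-- If `E` is finite, `k` is the number of minimal passages and `𝓟` is a passage
partitioning with `n` members, then `n ≤ k ≤ |E|`. -/
theorem partitioning_card_le {α : Type*} (V : Set α) (E : Set (α × α))
    (hE : E ⊆ V ×ˢ V) (hfin : E.Finite) (k : ℕ)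
    (hk : {P : Set (α × α) | IsMinimalPassage E P}.ncard = k)
    (𝓟 : Set (Set (α × α))) (h𝓟 : IsPassagePartitioning E 𝓟) (n : ℕ) (hn : 𝓟.ncard = n) :
    n ≤ k ∧ k ≤ E.ncard := by
  classical
  set S : Set (Set (α × α)) := {P | IsMinimalPassage E P} with hS
  have hSfin : S.Finite := by
    have : S ⊆ {t | t ⊆ E} := fun P hP => hP.1.1
    exact (hfin.finite_subsets).subset this
  -- every P ∈ 𝓟 contains a minimal passage
  have hmin : ∀ P ∈ 𝓟, ∃ M, IsMinimalPassage E M ∧ M ⊆ P := by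
    intro P hP
    obtain ⟨hpass, hne⟩ := h𝓟.1 P hP
    exact exists_minimal_sub hfin P.ncard P le_rfl hpass hne
  -- choice function
  let g : Set (α × α) → Set (α × α) := fun P =>
    if h : ∃ M, IsMinimalPassage E M ∧ M ⊆ P then h.choose else ∅
  have hg : ∀ P ∈ 𝓟, IsMinimalPassage E (g P) ∧ g P ⊆ P := by
    intro P hP
    have h := hmin P hP
    simpa [g, dif_pos h] using h.choose_spec
  constructor
  · -- n ≤ k
    rw [← hn, ← hk]
    refine Set.ncard_le_ncard_of_injOn g (fun P hP => (hg P hP).1) ?_ hSfin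
    · intro P hP Q hQ heq
      by_contra hPQ
      have hdisj := h𝓟.2.1 P hP Q hQ hPQ
      obtain ⟨e, he⟩ := Set.nonempty_iff_ne_empty.mpr (hg P hP).1.2.1
      have heP : e ∈ P := (hg P hP).2 he
      have heQ : e ∈ Q := (hg Q hQ).2 (heq ▸ he)
      exact absurd hdisj (Set.nonempty_iff_ne_empty.mp ⟨e, heP, heQ⟩)
  · -- k ≤ |E|
    rw [← hk]
    rcases Set.eq_empty_or_nonempty S with hSe | ⟨M₀, hM₀⟩
    · simp [hSe]
    · obtain ⟨e₀, he₀⟩ := Set.nonempty_iff_ne_empty.mpr hM₀.2.1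
      have he₀E : e₀ ∈ E := hM₀.1.1 he₀
      let f : Set (α × α) → α × α := fun M =>
        if h : M.Nonempty then h.choose else e₀
      have hf : ∀ M ∈ S, f M ∈ M := by
        intro M hM
        have h : M.Nonempty := Set.nonempty_iff_ne_empty.mpr hM.2.1
        simpa [f, dif_pos h] using h.choose_spec
      refine Set.ncard_le_ncard_of_injOn f (fun M hM => hM.1.1 (hf M hM)) ?_ hfin
      intro M hM N hN heq
      exact minimal_eq_of_inter hM hN ⟨f M, hf M hM, heq ▸ hf N hN⟩
end

section
/- Let G = (V,E) be a directed graph with E finite. The passage partitionings of G are in bijection with the partitions of the set pas_min(G) of minimal passages of G: mapping a partition {B₁, …, Bₘ} of pas_min(G) to the family {⋃B₁, …, ⋃Bₘ} of unions of its blocks is a bijection onto the set of passage partitionings of G. In particular, the number of passage partitionings of G equals the Bell number B_k where k = |pas_min(G)|. -/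
/-- A partition of a set `S`: a collection of nonempty, pairwise disjoint blocks
whose union is `S`. -/
def IsSetPartition {β : Type*} (S : Set β) (𝒬 : Set (Set β)) : Prop :=
  (∀ B ∈ 𝒬, B ≠ ∅) ∧ (∀ B ∈ 𝒬, ∀ C ∈ 𝒬, B ≠ C → B ∩ C = ∅) ∧ ⋃₀ 𝒬 = S

namespace PasAux


variable {α : Type*} {E : Set (α × α)}

lemma isPassage_self : IsPassage E E :=
  ⟨subset_rfl, fun _ _ _ => ⟨fun _ h => h, fun _ h => h⟩⟩

lemma isPassage_sUnion {𝒮 : Set (Set (α × α))} (h : ∀ P ∈ 𝒮, IsPassage E P) :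
    IsPassage E (⋃₀ 𝒮) := by
  constructor
  · exact Set.sUnion_subset fun P hP => (h P hP).1
  · intro x y hxy
    obtain ⟨P, hP, hxyP⟩ := Set.mem_sUnion.mp hxy
    obtain ⟨h1, h2⟩ := (h P hP).2 x y hxyP
    exact ⟨fun y' hy' => Set.mem_sUnion.mpr ⟨P, hP, h1 y' hy'⟩,
           fun x' hx' => Set.mem_sUnion.mpr ⟨P, hP, h2 x' hx'⟩⟩

lemma isPassage_sInter {𝒮 : Set (Set (α × α))} (h : ∀ P ∈ 𝒮, IsPassage E P)
    (hne : 𝒮.Nonempty) : IsPassage E (⋂₀ 𝒮) := by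
  obtain ⟨P0, hP0⟩ := hne
  constructor
  · exact (Set.sInter_subset_of_mem hP0).trans (h P0 hP0).1
  · intro x y hxy
    constructor
    · intro y' hy'
      exact Set.mem_sInter.mpr fun P hP => ((h P hP).2 x y (Set.mem_sInter.mp hxy P hP)).1 y' hy'
    · intro x' hx'
      exact Set.mem_sInter.mpr fun P hP => ((h P hP).2 x y (Set.mem_sInter.mp hxy P hP)).2 x' hx'

lemma isPassage_inter {P Q : Set (α × α)} (hP : IsPassage E P) (hQ : IsPassage E Q) :
    IsPassage E (P ∩ Q) := by
  constructor
  · exact Set.inter_subset_left.trans hP.1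
  · intro x y ⟨h1, h2⟩
    exact ⟨fun y' hy' => ⟨(hP.2 x y h1).1 y' hy', (hQ.2 x y h2).1 y' hy'⟩,
           fun x' hx' => ⟨(hP.2 x y h1).2 x' hx', (hQ.2 x y h2).2 x' hx'⟩⟩

lemma isPassage_diff {P Q : Set (α × α)} (hP : IsPassage E P) (hQ : IsPassage E Q) :
    IsPassage E (P \ Q) := by
  constructor
  · exact Set.diff_subset.trans hP.1
  · intro x y ⟨h1, h2⟩
    constructor
    · intro y' hy'
      refine ⟨(hP.2 x y h1).1 y' hy', fun hc => h2 ?_⟩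
      exact (hQ.2 x y' hc).1 y (hP.1 h1)
    · intro x' hx'
      refine ⟨(hP.2 x y h1).2 x' hx', fun hc => h2 ?_⟩
      exact (hQ.2 x' y hc).2 x (hP.1 h1)

/-- The minimal passage containing an edge. -/
def minPas (E : Set (α × α)) (e : α × α) : Set (α × α) :=
  ⋂₀ {P | IsPassage E P ∧ e ∈ P}

lemma mem_minPas {e : α × α} (he : e ∈ E) : e ∈ minPas E e :=
  Set.mem_sInter.mpr fun _ hP => hP.2

lemma minPas_isPassage {e : α × α} (_he : e ∈ E) : IsPassage E (minPas E e) :=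
  isPassage_sInter (fun _ hP => hP.1) ⟨E, isPassage_self, _he⟩

lemma minPas_subset {e : α × α} {P : Set (α × α)} (hP : IsPassage E P) (he : e ∈ P) :
    minPas E e ⊆ P :=
  Set.sInter_subset_of_mem ⟨hP, he⟩

lemma minPas_minimal {e : α × α} (he : e ∈ E) : IsMinimalPassage E (minPas E e) := by
  refine ⟨minPas_isPassage he, ?_, ?_⟩
  · exact Set.nonempty_iff_ne_empty.mp ⟨e, mem_minPas he⟩
  · intro P' hP' hne hss
    by_cases heP : e ∈ P'
    · exact hss.2 (minPas_subset hP' heP)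
    · have hdiff : IsPassage E (minPas E e \ P') :=
        isPassage_diff (minPas_isPassage he) hP'
      have : minPas E e ⊆ minPas E e \ P' :=
        minPas_subset hdiff ⟨mem_minPas he, heP⟩
      obtain ⟨a, ha⟩ := Set.nonempty_iff_ne_empty.mpr hne
      exact (this (hss.1 ha)).2 ha

lemma minimal_eq_of_subset {P Q : Set (α × α)} (hP : IsMinimalPassage E P)
    (hQ : IsPassage E Q) (hne : Q ≠ ∅) (hsub : Q ⊆ P) : Q = P := by
  by_contra h
  exact hP.2.2 Q hQ hne ⟨hsub, fun h' => h (le_antisymm hsub h')⟩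

lemma minimal_subset_of_inter {m P : Set (α × α)} (hm : IsMinimalPassage E m)
    (hP : IsPassage E P) (hne : (m ∩ P).Nonempty) : m ⊆ P := by
  have := minimal_eq_of_subset hm (isPassage_inter hm.1 hP)
    (Set.nonempty_iff_ne_empty.mp hne) Set.inter_subset_left
  rw [← this]; exact Set.inter_subset_right

lemma minimal_eq_of_mem {m m' : Set (α × α)} (hm : IsMinimalPassage E m)
    (hm' : IsMinimalPassage E m') {e : α × α} (he : e ∈ m) (he' : e ∈ m') : m = m' := by
  have h1 : m ⊆ m' := minimal_subset_of_inter hm hm'.1 ⟨e, he, he'⟩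
  have h2 : m' ⊆ m := minimal_subset_of_inter hm' hm.1 ⟨e, he', he⟩
  exact le_antisymm h1 h2

lemma eq_minPas_of_mem {m : Set (α × α)} (hm : IsMinimalPassage E m) {e : α × α}
    (he : e ∈ m) : m = minPas E e :=
  minimal_eq_of_mem hm (minPas_minimal (hm.1.1 he)) he (mem_minPas (hm.1.1 he))

section transfer

variable {β γ : Type*} {S : Set β} {T : Set γ} {g : β → γ}

lemma blocks_subset {𝒬 : Set (Set β)} (h : IsSetPartition S 𝒬) {B : Set β}
    (hB : B ∈ 𝒬) : B ⊆ S :=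
  h.2.2 ▸ Set.subset_sUnion_of_mem hB

lemma phi_maps (hg : Set.BijOn g S T) {𝒬 : Set (Set β)} (h : IsSetPartition S 𝒬) :
    IsSetPartition T ((fun B => g '' B) '' 𝒬) := by
  refine ⟨?_, ?_, ?_⟩
  · rintro _ ⟨B, hB, rfl⟩
    simpa [Set.image_eq_empty] using h.1 B hB
  · rintro _ ⟨B, hB, rfl⟩ _ ⟨C, hC, rfl⟩ hne
    have hBC : B ≠ C := by rintro rfl; exact hne rfl
    have hd := h.2.1 B hB C hC hBC
    ext x
    simp only [Set.mem_inter_iff, Set.mem_image, Set.mem_empty_iff_false, iff_false]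
    rintro ⟨⟨b, hb, rfl⟩, ⟨c, hc, hcb⟩⟩
    have : c = b := hg.injOn (blocks_subset h hC hc) (blocks_subset h hB hb) hcb
    subst this
    have : c ∈ B ∩ C := ⟨hb, hc⟩
    rw [hd] at this; exact this
  · have h1 : ⋃₀ ((fun B => g '' B) '' 𝒬) = g '' ⋃₀ 𝒬 := by
      ext x
      constructor
      · rintro ⟨_, ⟨B, hB, rfl⟩, b, hb, rfl⟩
        exact ⟨b, ⟨B, hB, hb⟩, rfl⟩
      · rintro ⟨b, ⟨B, hB, hb⟩, rfl⟩
        exact ⟨g '' B, ⟨B, hB, rfl⟩, ⟨b, hb, rfl⟩⟩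
    rw [h1, h.2.2, hg.image_eq]

lemma psi_maps (hg : Set.BijOn g S T) {𝒬 : Set (Set γ)} (h : IsSetPartition T 𝒬) :
    IsSetPartition S ((fun C => S ∩ g ⁻¹' C) '' 𝒬) := by
  refine ⟨?_, ?_, ?_⟩
  · rintro _ ⟨C, hC, rfl⟩
    have : C.Nonempty := Set.nonempty_iff_ne_empty.mpr (h.1 C hC)
    obtain ⟨c, hc⟩ := this
    have hcT : c ∈ T := blocks_subset h hC hc
    obtain ⟨x, hxS, rfl⟩ := hg.surjOn hcT
    exact Set.nonempty_iff_ne_empty.mp ⟨x, hxS, hc⟩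
  · rintro _ ⟨C, hC, rfl⟩ _ ⟨C', hC', rfl⟩ hne
    have hCC' : C ≠ C' := by rintro rfl; exact hne rfl
    have hd := h.2.1 C hC C' hC' hCC'
    ext x
    simp only [Set.mem_inter_iff, Set.mem_preimage, Set.mem_empty_iff_false, iff_false]
    rintro ⟨⟨-, hx1⟩, ⟨-, hx2⟩⟩
    have : g x ∈ C ∩ C' := ⟨hx1, hx2⟩
    rw [hd] at this; exact this
  · ext x
    simp only [Set.mem_sUnion, Set.mem_image]
    constructor
    · rintro ⟨_, ⟨C, hC, rfl⟩, hxS, -⟩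
      exact hxS
    · intro hxS
      have : g x ∈ ⋃₀ 𝒬 := h.2.2 ▸ hg.mapsTo hxS
      obtain ⟨C, hC, hgx⟩ := this
      exact ⟨S ∩ g ⁻¹' C, ⟨C, hC, rfl⟩, hxS, hgx⟩

lemma psi_phi (hg : Set.InjOn g S) {𝒬 : Set (Set β)} (h𝒬 : ∀ B ∈ 𝒬, B ⊆ S) :
    (fun C => S ∩ g ⁻¹' C) '' ((fun B => g '' B) '' 𝒬) = 𝒬 := by
  have key : ∀ B ∈ 𝒬, S ∩ g ⁻¹' (g '' B) = B := by
    intro B hB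
    ext x
    simp only [Set.mem_inter_iff, Set.mem_preimage, Set.mem_image]
    constructor
    · rintro ⟨hxS, b, hb, hbx⟩
      have : b = x := hg (h𝒬 B hB hb) hxS hbx
      exact this ▸ hb
    · intro hx
      exact ⟨h𝒬 B hB hx, x, hx, rfl⟩
  ext B
  constructor
  · rintro ⟨_, ⟨B', hB', rfl⟩, rfl⟩
    have := key B' hB'
    simpa [this] using hB'
  · intro hB
    exact ⟨g '' B, ⟨B, hB, rfl⟩, key B hB⟩

lemma phi_psi (hg : Set.BijOn g S T) {𝒬 : Set (Set γ)} (h𝒬 : ∀ C ∈ 𝒬, C ⊆ T) :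
    (fun B => g '' B) '' ((fun C => S ∩ g ⁻¹' C) '' 𝒬) = 𝒬 := by
  have key : ∀ C ∈ 𝒬, g '' (S ∩ g ⁻¹' C) = C := by
    intro C hC
    ext c
    simp only [Set.mem_image, Set.mem_inter_iff, Set.mem_preimage]
    constructor
    · rintro ⟨x, ⟨-, hx⟩, rfl⟩
      exact hx
    · intro hc
      obtain ⟨x, hxS, rfl⟩ := hg.surjOn (h𝒬 C hC hc)
      exact ⟨x, ⟨hxS, hc⟩, rfl⟩
  ext C
  constructor
  · rintro ⟨_, ⟨C', hC', rfl⟩, rfl⟩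
    have := key C' hC'
    simpa [this] using hC'
  · intro hC
    exact ⟨S ∩ g ⁻¹' C, ⟨C, hC, rfl⟩, key C hC⟩

lemma partitions_ncard_congr (hg : Set.BijOn g S T) :
    {𝒬 : Set (Set β) | IsSetPartition S 𝒬}.ncard
      = {𝒬 : Set (Set γ) | IsSetPartition T 𝒬}.ncard := by
  have hbij : Set.BijOn (fun 𝒬 : Set (Set β) => (fun B => g '' B) '' 𝒬)
      {𝒬 | IsSetPartition S 𝒬} {𝒬 | IsSetPartition T 𝒬} := by
    refine ⟨fun 𝒬 h𝒬 => phi_maps hg h𝒬, ?_, ?_⟩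
    · intro 𝒬 h𝒬 𝒬' h𝒬' heq
      calc 𝒬 = (fun C => S ∩ g ⁻¹' C) '' ((fun B => g '' B) '' 𝒬) :=
              (psi_phi hg.injOn (fun B hB => blocks_subset h𝒬 hB)).symm
        _ = (fun C => S ∩ g ⁻¹' C) '' ((fun B => g '' B) '' 𝒬') :=
              congrArg (Set.image fun C => S ∩ g ⁻¹' C) heq
        _ = 𝒬' := psi_phi hg.injOn (fun B hB => blocks_subset h𝒬' hB)
    · intro 𝒬' h𝒬'
      refine ⟨(fun C => S ∩ g ⁻¹' C) '' 𝒬', psi_maps hg h𝒬', ?_⟩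
      exact phi_psi hg (fun C hC => blocks_subset h𝒬' hC)
  rw [← hbij.image_eq, Set.ncard_image_of_injOn hbij.injOn]

end transfer


variable {α : Type*} {E : Set (α × α)}

/-- The set of minimal passages contained in `P`. -/
def bl (E P : Set (α × α)) : Set (Set (α × α)) :=
  {m | IsMinimalPassage E m ∧ m ⊆ P}

lemma sUnion_bl {P : Set (α × α)} (hP : IsPassage E P) : ⋃₀ bl E P = P := by
  apply subset_antisymm
  · exact Set.sUnion_subset fun m hm => hm.2
  · intro e he
    exact ⟨minPas E e, ⟨minPas_minimal (hP.1 he), minPas_subset hP he⟩, mem_minPas (hP.1 he)⟩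

lemma bl_sUnion {B : Set (Set (α × α))} (hB : ∀ m ∈ B, IsMinimalPassage E m) :
    bl E (⋃₀ B) = B := by
  ext m
  constructor
  · rintro ⟨hm, hsub⟩
    obtain ⟨e, he⟩ := Set.nonempty_iff_ne_empty.mpr hm.2.1
    obtain ⟨m', hm', he'⟩ := hsub he
    have := minimal_eq_of_mem hm (hB m' hm') he he'
    exact this ▸ hm'
  · intro hm
    exact ⟨hB m hm, Set.subset_sUnion_of_mem hm⟩

end PasAux

/-- Mapping a partition of the set of minimal passages to the family of unions of its
blocks is a bijection onto the set of passage partitionings.  In particular, the number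
of passage partitionings equals the Bell number `B_k` (the number of partitions of a
set of size `k`) where `k` is the number of minimal passages. -/
theorem passagePartitionings_bij_partitions {α : Type*} (V : Set α) (E : Set (α × α))
    (hE : E ⊆ V ×ˢ V) (hfin : E.Finite) (k : ℕ)
    (hk : {P : Set (α × α) | IsMinimalPassage E P}.ncard = k) :
    Set.BijOn (fun 𝒬 : Set (Set (Set (α × α))) => (fun B : Set (Set (α × α)) => ⋃₀ B) '' 𝒬)
      {𝒬 | IsSetPartition {P : Set (α × α) | IsMinimalPassage E P} 𝒬}
      {𝓟 | IsPassagePartitioning E 𝓟} ∧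
    {𝓟 : Set (Set (α × α)) | IsPassagePartitioning E 𝓟}.ncard
      = {𝒬 : Set (Set (Fin k)) | IsSetPartition Set.univ 𝒬}.ncard := by
  classical
  set M : Set (Set (α × α)) := {P | IsMinimalPassage E P} with hMdef
  have hbij : Set.BijOn
      (fun 𝒬 : Set (Set (Set (α × α))) => (fun B : Set (Set (α × α)) => ⋃₀ B) '' 𝒬)
      {𝒬 | IsSetPartition M 𝒬} {𝓟 | IsPassagePartitioning E 𝓟} := by
    refine ⟨?_, ?_, ?_⟩
    · -- MapsTo
      intro 𝒬 h𝒬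
      have hBM : ∀ B ∈ 𝒬, B ⊆ M := fun B hB => PasAux.blocks_subset h𝒬 hB
      refine ⟨?_, ?_, ?_⟩
      · rintro _ ⟨B, hB, rfl⟩
        constructor
        · exact PasAux.isPassage_sUnion fun m hm => (hBM B hB hm).1
        · obtain ⟨m, hm⟩ := Set.nonempty_iff_ne_empty.mpr (h𝒬.1 B hB)
          obtain ⟨e, he⟩ := Set.nonempty_iff_ne_empty.mpr (hBM B hB hm).2.1
          exact Set.nonempty_iff_ne_empty.mp ⟨e, m, hm, he⟩
      · rintro _ ⟨B, hB, rfl⟩ _ ⟨C, hC, rfl⟩ hnePQ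
        have hBC : B ≠ C := fun h => hnePQ (by rw [h])
        have hd := h𝒬.2.1 B hB C hC hBC
        ext e
        simp only [Set.mem_inter_iff, Set.mem_empty_iff_false, iff_false]
        rintro ⟨⟨m1, hm1, he1⟩, ⟨m2, hm2, he2⟩⟩
        have hmm : m1 = m2 := PasAux.minimal_eq_of_mem (hBM B hB hm1) (hBM C hC hm2) he1 he2
        subst hmm
        have : m1 ∈ B ∩ C := ⟨hm1, hm2⟩
        rw [hd] at this; exact this
      · apply subset_antisymm
        · rintro e ⟨_, ⟨B, hB, rfl⟩, m, hm, he⟩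
          exact (hBM B hB hm).1.1 he
        · intro e he
          have hmin : PasAux.minPas E e ∈ M := PasAux.minPas_minimal he
          rw [← h𝒬.2.2] at hmin
          obtain ⟨B, hB, hmB⟩ := hmin
          exact ⟨⋃₀ B, ⟨B, hB, rfl⟩, PasAux.minPas E e, hmB, PasAux.mem_minPas he⟩
    · -- InjOn
      have key : ∀ 𝒬1 𝒬2 : Set (Set (Set (α × α))), IsSetPartition M 𝒬1 → IsSetPartition M 𝒬2 →
          (fun B : Set (Set (α × α)) => ⋃₀ B) '' 𝒬1 = (fun B : Set (Set (α × α)) => ⋃₀ B) '' 𝒬2 →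
          𝒬1 ⊆ 𝒬2 := by
        intro 𝒬1 𝒬2 h1 h2 he B hB
        have hmem : ⋃₀ B ∈ (fun B : Set (Set (α × α)) => ⋃₀ B) '' 𝒬2 := he ▸ ⟨B, hB, rfl⟩
        obtain ⟨B', hB', hBB'⟩ := hmem
        have e1 : PasAux.bl E (⋃₀ B) = B :=
          PasAux.bl_sUnion fun m hm => PasAux.blocks_subset h1 hB hm
        have e2 : PasAux.bl E (⋃₀ B') = B' :=
          PasAux.bl_sUnion fun m hm => PasAux.blocks_subset h2 hB' hm
        have hBB2 : ⋃₀ B' = ⋃₀ B := hBB'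
        have hfin' : B = B' := by rw [← e1, ← e2, hBB2]
        exact hfin' ▸ hB'
      intro 𝒬 h𝒬 𝒬' h𝒬' heq
      exact subset_antisymm (key 𝒬 𝒬' h𝒬 h𝒬' heq) (key 𝒬' 𝒬 h𝒬' h𝒬 heq.symm)
    · -- SurjOn
      intro 𝓟 h𝓟
      obtain ⟨hpass, hdis, hun⟩ := h𝓟
      refine ⟨(fun P => PasAux.bl E P) '' 𝓟, ⟨?_, ?_, ?_⟩, ?_⟩
      · rintro _ ⟨P, hP, rfl⟩
        obtain ⟨e, he⟩ := Set.nonempty_iff_ne_empty.mpr (hpass P hP).2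
        refine Set.nonempty_iff_ne_empty.mp ⟨PasAux.minPas E e, ?_⟩
        exact ⟨PasAux.minPas_minimal ((hpass P hP).1.1 he),
          PasAux.minPas_subset (hpass P hP).1 he⟩
      · rintro _ ⟨P, hP, rfl⟩ _ ⟨Q, hQ, rfl⟩ hne
        have hPQ : P ≠ Q := fun h => hne (by rw [h])
        have hd := hdis P hP Q hQ hPQ
        ext m
        simp only [Set.mem_inter_iff, Set.mem_empty_iff_false, iff_false]
        rintro ⟨⟨hm, hmP⟩, ⟨-, hmQ⟩⟩
        obtain ⟨e, he⟩ := Set.nonempty_iff_ne_empty.mpr hm.2.1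
        have : e ∈ P ∩ Q := ⟨hmP he, hmQ he⟩
        rw [hd] at this; exact this
      · apply subset_antisymm
        · rintro m ⟨_, ⟨P, hP, rfl⟩, hm, -⟩
          exact hm
        · intro m hm
          obtain ⟨e, he⟩ := Set.nonempty_iff_ne_empty.mpr hm.2.1
          have heE : e ∈ E := hm.1.1 he
          rw [← hun] at heE
          obtain ⟨P, hP, heP⟩ := heE
          refine ⟨PasAux.bl E P, ⟨P, hP, rfl⟩, hm, ?_⟩
          exact PasAux.minimal_subset_of_inter hm (hpass P hP).1 ⟨e, he, heP⟩
      · ext P'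
        constructor
        · rintro ⟨_, ⟨P, hP, rfl⟩, rfl⟩
          show ⋃₀ PasAux.bl E P ∈ 𝓟
          rw [PasAux.sUnion_bl (hpass P hP).1]; exact hP
        · intro hP'
          exact ⟨PasAux.bl E P', ⟨P', hP', rfl⟩, PasAux.sUnion_bl (hpass P' hP').1⟩
  refine ⟨hbij, ?_⟩
  have hMfin : M.Finite := hfin.finite_subsets.subset fun m hm => hm.1.1
  haveI := hMfin.fintype
  have hcard : Fintype.card M = k := by
    rw [← hk, Set.ncard_eq_toFinset_card' M, Set.toFinset_card]
  let eqv := Fintype.equivFinOfCardEq hcard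
  have hgbij : Set.BijOn (fun j : Fin k => (eqv.symm j : Set (α × α))) Set.univ M := by
    refine ⟨fun j _ => (eqv.symm j).2, ?_, ?_⟩
    · intro j _ j' _ hjj'
      exact eqv.symm.injective (Subtype.ext hjj')
    · intro m hm
      exact ⟨eqv ⟨m, hm⟩, Set.mem_univ _, by simp⟩
  have h2 := PasAux.partitions_ncard_congr hgbij
  have h1 : {𝓟 | IsPassagePartitioning E 𝓟}.ncard = {𝒬 | IsSetPartition M 𝒬}.ncard := by
    rw [← hbij.image_eq, Set.ncard_image_of_injOn hbij.injOn]
  rw [h1, h2]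
end

section
/- Let G = (V,E) be a directed graph and 𝒫 = {P₁, …, Pₙ} a passage partitioning of G. Define V_iso = V \ (π₁(E) ∪ π₂(E)), V_in = π₁(E) \ π₂(E), V_out = π₂(E) \ π₁(E), V_con = ⋃_{i ≠ j} (π₂(Pᵢ) ∩ π₁(Pⱼ)), and V_loc = ⋃_i (π₁(Pᵢ) ∩ π₂(Pᵢ)). Then V = V_iso ∪ V_in ∪ V_out ∪ V_con ∪ V_loc and these five sets are pairwise disjoint, i.e., they partition V. -/
/-!
A passage contains every edge of `E` leaving any of its initial vertices and every edge entering
any of its terminal vertices, so in a passage partitioning each vertex is an initial vertex of at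
most one part and a terminal vertex of at most one part. A vertex of `π₁ E ∩ π₂ E` is therefore
connecting or local according as these two parts differ or coincide, and never both; the other
three classes are cut out by membership in `π₁ E` and `π₂ E`.
-/

namespace Set

variable {α : Type*} {V A B C D : Set α}

theorem eq_diff_union_diff_union_diff_union_union (hAB : A ∪ B ⊆ V) (hCD : C ∪ D = A ∩ B) :
    V = V \ (A ∪ B) ∪ A \ B ∪ B \ A ∪ C ∪ D := by
  rw [union_assoc _ C, hCD]
  ext v
  have := @hAB v
  simp only [mem_union, mem_sdiff, mem_inter_iff] at this ⊢
  tauto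

theorem pairwise_disjoint_diff_diff_diff (hC : C ⊆ A ∩ B) (hD : D ⊆ A ∩ B) (hCD : Disjoint C D) :
    List.Pairwise Disjoint [V \ (A ∪ B), A \ B, B \ A, C, D] := by
  simp only [List.pairwise_cons, List.mem_cons, List.not_mem_nil, forall_eq_or_imp, or_false,
    forall_eq, List.Pairwise.nil, and_true, IsEmpty.forall_iff, implies_true]
  refine ⟨⟨?_, ?_, ?_, ?_⟩, ⟨?_, ?_, ?_⟩, ⟨?_, ?_⟩, hCD⟩
  all_goals
    rw [disjoint_left]
    intro v
    have := @hC v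
    have := @hD v
    simp only [mem_union, mem_sdiff, mem_inter_iff] at *
    tauto

end Set

section Vertices

variable {α : Type*}

def connectingVertices (𝓟 : Set (Set (α × α))) : Set α :=
  {v | ∃ P ∈ 𝓟, ∃ Q ∈ 𝓟, P ≠ Q ∧ v ∈ Prod.snd '' P ∧ v ∈ Prod.fst '' Q}

def localVertices (𝓟 : Set (Set (α × α))) : Set α :=
  ⋃ P ∈ 𝓟, Prod.fst '' P ∩ Prod.snd '' P

end Vertices

namespace IsPassagePartitioning

variable {α : Type*} {E : Set (α × α)} {𝓟 : Set (Set (α × α))} {P Q : Set (α × α)} {v : α}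

theorem subset_of_mem (h : IsPassagePartitioning E 𝓟) (hP : P ∈ 𝓟) : P ⊆ E :=
  (h.1 P hP).1.1

theorem eq_of_mem_fst_image (h : IsPassagePartitioning E 𝓟) (hP : P ∈ 𝓟) (hQ : Q ∈ 𝓟)
    (hvP : v ∈ Prod.fst '' P) (hvQ : v ∈ Prod.fst '' Q) : P = Q := by
  obtain ⟨⟨x, y⟩, hxy, rfl⟩ := hvP
  obtain ⟨⟨x', y'⟩, hxy', hx : x' = x⟩ := hvQ
  subst hx
  by_contra hne
  have hmem : (x', y') ∈ P := ((h.1 P hP).1.2 x' y hxy).1 y' (h.subset_of_mem hQ hxy')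
  exact Set.eq_empty_iff_forall_notMem.1 (h.2.1 P hP Q hQ hne) _ ⟨hmem, hxy'⟩

theorem eq_of_mem_snd_image (h : IsPassagePartitioning E 𝓟) (hP : P ∈ 𝓟) (hQ : Q ∈ 𝓟)
    (hvP : v ∈ Prod.snd '' P) (hvQ : v ∈ Prod.snd '' Q) : P = Q := by
  obtain ⟨⟨x, y⟩, hxy, rfl⟩ := hvP
  obtain ⟨⟨x', y'⟩, hxy', hy : y' = y⟩ := hvQ
  subst hy
  by_contra hne
  have hmem : (x', y') ∈ P := ((h.1 P hP).1.2 x y' hxy).2 x' (h.subset_of_mem hQ hxy')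
  exact Set.eq_empty_iff_forall_notMem.1 (h.2.1 P hP Q hQ hne) _ ⟨hmem, hxy'⟩

theorem mem_image_iff (h : IsPassagePartitioning E 𝓟) {β : Type*} (f : α × α → β) {b : β} :
    b ∈ f '' E ↔ ∃ P ∈ 𝓟, b ∈ f '' P := by
  rw [← h.2.2, Set.image_sUnion, Set.sUnion_image, Set.mem_iUnion₂]
  simp only [exists_prop]

theorem connectingVertices_union_localVertices (h : IsPassagePartitioning E 𝓟) :
    connectingVertices 𝓟 ∪ localVertices 𝓟 = Prod.fst '' E ∩ Prod.snd '' E := by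
  ext v
  simp only [connectingVertices, localVertices, Set.mem_union, Set.mem_ofPred_eq,
    Set.mem_iUnion₂, Set.mem_inter_iff, h.mem_image_iff, exists_prop]
  constructor
  · rintro (⟨P, hP, Q, hQ, -, hvP, hvQ⟩ | ⟨P, hP, hvP₁, hvP₂⟩)
    · exact ⟨⟨Q, hQ, hvQ⟩, ⟨P, hP, hvP⟩⟩
    · exact ⟨⟨P, hP, hvP₁⟩, ⟨P, hP, hvP₂⟩⟩
  · rintro ⟨⟨Q, hQ, hvQ⟩, ⟨P, hP, hvP⟩⟩
    by_cases hPQ : P = Q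
    · subst hPQ
      exact Or.inr ⟨P, hP, hvQ, hvP⟩
    · exact Or.inl ⟨P, hP, Q, hQ, hPQ, hvP, hvQ⟩

theorem disjoint_connectingVertices_localVertices (h : IsPassagePartitioning E 𝓟) :
    Disjoint (connectingVertices 𝓟) (localVertices 𝓟) := by
  rw [Set.disjoint_left]
  rintro v ⟨P, hP, Q, hQ, hPQ, hvP, hvQ⟩ hv
  obtain ⟨R, hR, hvR₁, hvR₂⟩ := by
    simpa only [localVertices, Set.mem_iUnion₂, exists_prop] using hv
  exact hPQ <|
    (h.eq_of_mem_snd_image hP hR hvP hvR₂).trans (h.eq_of_mem_fst_image hQ hR hvQ hvR₁).symm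

end IsPassagePartitioning

/-- Given a passage partitioning, the vertices split into isolated vertices, input
vertices, output vertices, connecting vertices and local vertices; these five sets
are pairwise disjoint and their union is `V`. -/
theorem five_types_of_vertices {α : Type*} (V : Set α) (E : Set (α × α))
    (hE : E ⊆ V ×ˢ V) (𝓟 : Set (Set (α × α))) (h𝓟 : IsPassagePartitioning E 𝓟) :
    let π₁ : Set (α × α) → Set α := fun P => Prod.fst '' P
    let π₂ : Set (α × α) → Set α := fun P => Prod.snd '' P
    let Viso : Set α := V \ (π₁ E ∪ π₂ E)
    let Vin : Set α := π₁ E \ π₂ E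
    let Vout : Set α := π₂ E \ π₁ E
    let Vcon : Set α := {v | ∃ P ∈ 𝓟, ∃ Q ∈ 𝓟, P ≠ Q ∧ v ∈ π₂ P ∧ v ∈ π₁ Q}
    let Vloc : Set α := ⋃ P ∈ 𝓟, π₁ P ∩ π₂ P
    V = Viso ∪ Vin ∪ Vout ∪ Vcon ∪ Vloc ∧
      List.Pairwise Disjoint [Viso, Vin, Vout, Vcon, Vloc] := by
  intro π₁ π₂ Viso Vin Vout Vcon Vloc
  have hV : π₁ E ∪ π₂ E ⊆ V := Set.union_subset
    ((Set.image_mono hE).trans (Set.fst_image_prod_subset V V))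
    ((Set.image_mono hE).trans (Set.snd_image_prod_subset V V))
  have hsplit := h𝓟.connectingVertices_union_localVertices
  obtain ⟨hcon, hloc⟩ := Set.union_subset_iff.1 hsplit.subset
  exact ⟨Set.eq_diff_union_diff_union_diff_union_union hV hsplit,
    Set.pairwise_disjoint_diff_diff_diff hcon hloc h𝓟.disjoint_connectingVertices_localVertices⟩
end
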